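/- arXiv:2006.05156 — 3 statements merged into one kernel-verified Lean document; each statement's English description precedes it below -/
import Mathlib

section
/- The set of formulas {size ≥ β | β ∈ ℕ} is unsatisfiable (since heaps have finite domains), yet every finite subset of it is satisfiable. Consequently, the semantic entailment relation of quantifier-free separation logic is not compact. -/
abbrev Var := ℕ
abbrev Loc := ℕ
abbrev Heap := Finmap (fun _ : Loc => Loc)
abbrev Store := Var → Loc

def SLProp := Store → Heap → Prop

def star (P Q : SLProp) : SLProp := fun s h =>
  ∃ h₁ h₂ : Heap, Finmap.Disjoint h₁ h₂ ∧ h₁ ∪ h₂ = h ∧ P s h₁ ∧ Q s h₂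

def wand (P Q : SLProp) : SLProp := fun s h =>
  ∀ h' : Heap, Finmap.Disjoint h' h → P s h' → Q s (h ∪ h')

def septraction (P Q : SLProp) : SLProp := fun s h =>
  ∃ h' : Heap, Finmap.Disjoint h h' ∧ P s h' ∧ Q s (h ∪ h')

theorem Finmap.keys_surjective {α : Type*} {β : α → Type*} [∀ a, Inhabited (β a)] :
    Function.Surjective (Finmap.keys : Finmap β → Finset α) := by
  classical
  intro s
  refine ⟨keysLookupEquiv.symm ⟨(s, fun a => if a ∈ s then some default else none), fun a => ?_⟩,
    keysLookupEquiv_symm_apply_keys _⟩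
  by_cases ha : a ∈ s <;> simp [ha]

theorem Finmap.exists_card_keys_eq {α : Type*} {β : α → Type*} [Infinite α]
    [∀ a, Inhabited (β a)] (n : ℕ) : ∃ m : Finmap β, m.keys.card = n := by
  obtain ⟨s, hs⟩ := Infinite.exists_subset_card_eq α n
  obtain ⟨m, rfl⟩ := Finmap.keys_surjective (β := β) s
  exact ⟨m, hs⟩

/-- {size ≥ β | β ∈ ℕ} is unsatisfiable, but every finite subset of it is
satisfiable (failure of compactness). -/
theorem stmt_9 :
    (¬ ∃ (s : Store) (h : Heap), ∀ β : ℕ, β ≤ (Finmap.keys h).card) ∧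
    (∀ Γ : Finset ℕ, ∃ (s : Store) (h : Heap), ∀ β ∈ Γ, β ≤ (Finmap.keys h).card) := by
  refine ⟨fun ⟨_, h, hall⟩ => (hall (h.keys.card + 1)).not_gt (Nat.lt_succ_self _), fun Γ => ?_⟩
  obtain ⟨h, hh⟩ := Finmap.exists_card_keys_eq (β := fun _ : Loc => Loc) (Γ.sup id)
  exact ⟨fun _ => 0, h, fun β hβ => hh ▸ Finset.le_sup (f := id) hβ⟩
end

section
/- If s and s' are two stores that agree on an equivalence relation on a finite set X of variables (i.e., for all x, y ∈ X, s(x) = s(y) iff s'(x) = s'(y)), then for every heap h there exists a heap h' such that (s, h) and (s', h') satisfy exactly the same atomic core formulas over X: x = y, x ↪ y, alloc(x) (for x, y ∈ X) and size ≥ β for all β. -/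
open Classical in
/-- Map a heap along an injective function on locations. -/
noncomputable def mapHeap (σ : Loc → Loc) (hinj : Function.Injective σ) (h : Heap) : Heap :=
  ⟨h.entries.map (fun p => ⟨σ p.1, σ p.2⟩), by
    rw [← Multiset.nodup_keys]
    have : Multiset.keys (h.entries.map (fun p : Σ _ : Loc, Loc => (⟨σ p.1, σ p.2⟩ : Σ _ : Loc, Loc)))
        = (Multiset.keys h.entries).map σ := by
      simp [Multiset.keys, Multiset.map_map, Function.comp]
    rw [this]
    exact (h.nodupKeys.nodup_keys).map hinj⟩

theorem mapHeap_keys (σ : Loc → Loc) (hinj : Function.Injective σ) (h : Heap) :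
    (Multiset.keys (mapHeap σ hinj h).entries) = (Multiset.keys h.entries).map σ := by
  simp [mapHeap, Multiset.keys, Multiset.map_map, Function.comp]

theorem mapHeap_mem (σ : Loc → Loc) (hinj : Function.Injective σ) (h : Heap) (a : Loc) :
    σ a ∈ mapHeap σ hinj h ↔ a ∈ h := by
  rw [Finmap.mem_def, Finmap.mem_def, mapHeap_keys]
  constructor
  · rintro hm
    rcases Multiset.mem_map.1 hm with ⟨k, hk, hka⟩
    rwa [hinj hka] at hk
  · intro hm; exact Multiset.mem_map_of_mem _ hm

theorem mapHeap_lookup (σ : Loc → Loc) (hinj : Function.Injective σ) (h : Heap) (a b : Loc) :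
    (mapHeap σ hinj h).lookup (σ a) = some (σ b) ↔ h.lookup a = some b := by
  rw [Finmap.lookup_eq_some_iff, Finmap.lookup_eq_some_iff]
  show (⟨σ a, σ b⟩ : Σ _ : Loc, Loc) ∈ h.entries.map _ ↔ _
  rw [Multiset.mem_map]
  constructor
  · rintro ⟨p, hp, heq⟩
    obtain ⟨h1, h2⟩ := Sigma.mk.inj_iff.1 heq
    obtain rfl : p.1 = a := hinj h1
    obtain rfl : p.2 = b := hinj (eq_of_heq h2)
    exact hp
  · intro hm; exact ⟨⟨a, b⟩, hm, rfl⟩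

theorem mapHeap_card (σ : Loc → Loc) (hinj : Function.Injective σ) (h : Heap) :
    ((mapHeap σ hinj h).keys).card = (h.keys).card := by
  show Multiset.card (Multiset.keys (mapHeap σ hinj h).entries)
      = Multiset.card (Multiset.keys h.entries)
  rw [mapHeap_keys]; simp

theorem exists_perm (X : Finset Var) (s s' : Store)
    (hagree : ∀ x ∈ X, ∀ y ∈ X, (s x = s y ↔ s' x = s' y)) :
    ∃ σ : Equiv.Perm Loc, ∀ x ∈ X, σ (s x) = s' x := by
  classical
  set A : Set Loc := ↑(X.image s) with hA
  set B : Set Loc := ↑(X.image s') with hB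
  set F : Loc → Loc := fun l =>
    if hl : ∃ x ∈ X, s x = l then s' hl.choose else l with hF
  have hFval : ∀ x ∈ X, F (s x) = s' x := by
    intro x hx
    have hl : ∃ y ∈ X, s y = s x := ⟨x, hx, rfl⟩
    have h1 := hl.choose_spec
    simp only [hF, dif_pos hl]
    exact (hagree _ h1.1 _ hx).1 h1.2
  have hbij : Set.BijOn F A B := by
    refine ⟨?_, ?_, ?_⟩
    · rintro l hl
      rcases Finset.mem_image.1 hl with ⟨x, hx, rfl⟩
      rw [hFval x hx]
      exact Finset.mem_image_of_mem _ hx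
    · rintro l₁ hl₁ l₂ hl₂ he
      rcases Finset.mem_image.1 hl₁ with ⟨x, hx, rfl⟩
      rcases Finset.mem_image.1 hl₂ with ⟨y, hy, rfl⟩
      rw [hFval x hx, hFval y hy] at he
      exact (hagree _ hx _ hy).2 he
    · rintro l hl
      rcases Finset.mem_image.1 hl with ⟨x, hx, rfl⟩
      exact ⟨s x, Finset.mem_image_of_mem _ hx, hFval x hx⟩
  have hAfin : A.Finite := (X.image s).finite_toSet
  have hBfin : B.Finite := (X.image s').finite_toSet
  have hAc : (Aᶜ : Set Loc).Infinite := Set.Finite.infinite_compl hAfin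
  have hBc : (Bᶜ : Set Loc).Infinite := Set.Finite.infinite_compl hBfin
  have : Infinite (↥(Aᶜ)) := hAc.to_subtype
  have : Infinite (↥(Bᶜ)) := hBc.to_subtype
  obtain ⟨e1⟩ : Nonempty (↥(Aᶜ) ≃ ↥(Bᶜ)) := nonempty_equiv_of_countable
  let e0 : ↥A ≃ ↥B := hbij.equiv F
  let σ : Equiv.Perm Loc :=
    (Equiv.Set.sumCompl A).symm.trans ((e0.sumCongr e1).trans (Equiv.Set.sumCompl B))
  refine ⟨σ, fun x hx => ?_⟩
  have hmem : s x ∈ A := Finset.mem_image_of_mem _ hx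
  show (Equiv.Set.sumCompl B) ((e0.sumCongr e1) ((Equiv.Set.sumCompl A).symm (s x))) = s' x
  rw [Equiv.Set.sumCompl_symm_apply_of_mem hmem]
  simp only [Equiv.sumCongr_apply, Sum.map_inl, Equiv.Set.sumCompl_apply_inl]
  show F (s x) = s' x
  exact hFval x hx


/-- Stores agreeing on (in)equalities over X give, for any heap, a heap
satisfying the same atomic core formulas over X. -/
theorem stmt_16 (X : Finset Var) (s s' : Store)
    (hagree : ∀ x ∈ X, ∀ y ∈ X, (s x = s y ↔ s' x = s' y)) :
    ∀ h : Heap, ∃ h' : Heap,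
      (∀ x ∈ X, ∀ y ∈ X, (s x = s y ↔ s' x = s' y)) ∧
      (∀ x ∈ X, ∀ y ∈ X,
        (Finmap.lookup (s x) h = some (s y) ↔ Finmap.lookup (s' x) h' = some (s' y))) ∧
      (∀ x ∈ X, (s x ∈ h ↔ s' x ∈ h')) ∧
      (∀ β : ℕ, (β ≤ (Finmap.keys h).card ↔ β ≤ (Finmap.keys h').card)) := by
  intro h
  obtain ⟨σ, hσ⟩ := exists_perm X s s' hagree
  refine ⟨mapHeap σ σ.injective h, hagree, ?_, ?_, ?_⟩
  · intro x hx y hy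
    rw [← hσ x hx, ← hσ y hy, mapHeap_lookup]
  · intro x hx
    rw [← hσ x hx, mapHeap_mem]
  · intro β
    rw [mapHeap_card]
end

section
/- Satisfiability reduces to validity in quantifier-free separation logic: a formula φ over a finite set X of variables is satisfiable if and only if there exists an equivalence relation ≈ on X such that the formula (emp ∧ ⋀_{x≈y} x = y ∧ ⋀_{x≉y} x ≠ y) ⟹ (φ ⧆ ⊤) is valid. -/
inductive Formula : Type where
  | eq : Var → Var → Formula
  | pto : Var → Var → Formula
  | emp : Formula
  | not : Formula → Formula
  | and : Formula → Formula → Formula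
  | star : Formula → Formula → Formula
  | wand : Formula → Formula → Formula

def Formula.vars : Formula → Finset Var
  | .eq x y => {x, y}
  | .pto x y => {x, y}
  | .emp => ∅
  | .not φ => φ.vars
  | .and φ ψ => φ.vars ∪ ψ.vars
  | .star φ ψ => φ.vars ∪ ψ.vars
  | .wand φ ψ => φ.vars ∪ ψ.vars

def sat : Store → Heap → Formula → Prop
  | s, _, .eq x y => s x = s y
  | s, h, .pto x y => Finmap.lookup (s x) h = some (s y)
  | _, h, .emp => h = ∅
  | s, h, .not φ => ¬ sat s h φ
  | s, h, .and φ ψ => sat s h φ ∧ sat s h ψ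
  | s, h, .star φ ψ =>
      ∃ h₁ h₂ : Heap, Finmap.Disjoint h₁ h₂ ∧ h₁ ∪ h₂ = h ∧ sat s h₁ φ ∧ sat s h₂ ψ
  | s, h, .wand φ ψ =>
      ∀ h' : Heap, Finmap.Disjoint h' h → sat s h' φ → sat s (h ∪ h') ψ

/-! Satisfaction is invariant under renaming locations by a permutation σ, provided the store is
renamed along with the heap. Two stores inducing the same equalities on the finite set `X` differ,
on `X`, by such a permutation, so if `φ` holds in `(s, h)` then every store with the equality
pattern of `s` on `X` satisfies `φ` on a renamed copy of `h`, which is disjoint from the empty heap.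
Conversely every equivalence relation is the equality pattern of some store, and validity at that
store with the empty heap yields a model of `φ`. -/

theorem Equiv.Perm.exists_apply_eq_of_eq_iff_eq {α β : Type*} {X : Finset α} {f g : α → β}
    (hfg : ∀ x ∈ X, ∀ y ∈ X, f x = f y ↔ g x = g y) :
    ∃ σ : Equiv.Perm β, ∀ x ∈ X, σ (f x) = g x := by
  classical
  -- `σ` only has to send the first coordinate of each pair `(f x, g x)` to the second.
  let T := X.image fun x => (f x, g x)
  have hT : ∀ p ∈ T, ∀ q ∈ T, p.1 = q.1 ↔ p.2 = q.2 := by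
    simp only [T, Finset.mem_image]
    rintro _ ⟨x, hx, rfl⟩ _ ⟨y, hy, rfl⟩
    exact hfg x hx y hy
  obtain ⟨σ, hσ⟩ := Equiv.Perm.exists_extending_pair (fun p : T => p.1.1) (fun p : T => p.1.2)
    (fun p q hpq => Subtype.ext (Prod.ext hpq ((hT _ p.2 _ q.2).1 hpq)))
    (fun p q hpq => Subtype.ext (Prod.ext ((hT _ p.2 _ q.2).2 hpq) hpq))
  exact ⟨σ, fun x hx => hσ ⟨(f x, g x), Finset.mem_image_of_mem _ hx⟩⟩

theorem Equivalence.exists_eq_iff {α : Type*} {r : α → α → Prop} (hr : Equivalence r) :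
    ∃ f : α → α, ∀ x y, f x = f y ↔ r x y :=
  let _ : Setoid α := ⟨r, hr⟩
  ⟨fun x => (⟦x⟧ : Quotient _).out, fun _ _ => Quotient.out_inj.trans Quotient.eq⟩

def renameHeap (σ : Equiv.Perm Loc) (h : Heap) : Heap :=
  Finmap.keysLookupEquiv.symm
    ⟨(h.keys.map σ.toEmbedding, fun a => (h.lookup (σ.symm a)).map σ), fun a => by
      simp [Finmap.lookup_isSome, ← Finmap.mem_keys]⟩

@[simp]
theorem lookup_renameHeap (σ : Equiv.Perm Loc) (h : Heap) (a : Loc) :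
    (renameHeap σ h).lookup a = (h.lookup (σ.symm a)).map σ := by
  simp [renameHeap]

theorem mem_renameHeap {σ : Equiv.Perm Loc} {h : Heap} {a : Loc} :
    a ∈ renameHeap σ h ↔ σ.symm a ∈ h := by
  simp [← Finmap.lookup_isSome]

theorem renameHeap_symm_renameHeap (σ : Equiv.Perm Loc) (h : Heap) :
    renameHeap σ.symm (renameHeap σ h) = h :=
  Finmap.ext_lookup fun a => by
    rw [lookup_renameHeap, lookup_renameHeap, Equiv.symm_symm, Equiv.symm_apply_apply]
    cases h.lookup a <;> simp

theorem renameHeap_bijective (σ : Equiv.Perm Loc) : Function.Bijective (renameHeap σ) :=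
  Function.bijective_iff_has_inverse.2 ⟨renameHeap σ.symm,
    renameHeap_symm_renameHeap σ, fun h => by simpa using renameHeap_symm_renameHeap σ.symm h⟩

theorem renameHeap_union (σ : Equiv.Perm Loc) (h₁ h₂ : Heap) :
    renameHeap σ (h₁ ∪ h₂) = renameHeap σ h₁ ∪ renameHeap σ h₂ := by
  refine Finmap.ext_lookup fun a => ?_
  by_cases ha : σ.symm a ∈ h₁
  · rw [Finmap.lookup_union_left (mem_renameHeap.2 ha), lookup_renameHeap, lookup_renameHeap,
      Finmap.lookup_union_left ha]
  · rw [Finmap.lookup_union_right (mt mem_renameHeap.1 ha), lookup_renameHeap,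
      lookup_renameHeap, Finmap.lookup_union_right ha]

theorem disjoint_renameHeap {σ : Equiv.Perm Loc} {h₁ h₂ : Heap} :
    Finmap.Disjoint (renameHeap σ h₁) (renameHeap σ h₂) ↔ Finmap.Disjoint h₁ h₂ := by
  simp only [Finmap.Disjoint, mem_renameHeap]
  exact (σ.forall_congr_left (p := fun a => a ∈ h₁ → a ∉ h₂)).symm

theorem renameHeap_eq_empty {σ : Equiv.Perm Loc} {h : Heap} : renameHeap σ h = ∅ ↔ h = ∅ := by
  have h_empty : renameHeap σ ∅ = ∅ := Finmap.ext_lookup fun _ => by simp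
  exact ⟨fun h' => (renameHeap_bijective σ).injective (h'.trans h_empty.symm),
    fun h' => h' ▸ h_empty⟩

theorem sat_renameHeap (σ : Equiv.Perm Loc) {s s' : Store} (φ : Formula)
    (hs : ∀ x ∈ φ.vars, s' x = σ (s x)) (h : Heap) :
    sat s' (renameHeap σ h) φ ↔ sat s h φ := by
  have hρ := renameHeap_bijective σ
  induction φ generalizing h with
  | eq x y =>
    simp only [sat, hs x (by simp [Formula.vars]), hs y (by simp [Formula.vars]),
      σ.injective.eq_iff]
  | pto x y =>
    rw [sat, sat, lookup_renameHeap, hs x (by simp [Formula.vars]), hs y (by simp [Formula.vars]),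
      Equiv.symm_apply_apply]
    exact (Option.map_injective σ.injective).eq_iff (b := some (s y))
  | emp => exact renameHeap_eq_empty
  | not φ ih => exact not_congr (ih hs h)
  | and φ ψ ihφ ihψ =>
    exact and_congr (ihφ (fun x hx => hs x (Finset.mem_union_left _ hx)) h)
      (ihψ (fun x hx => hs x (Finset.mem_union_right _ hx)) h)
  | star φ ψ ihφ ihψ =>
    have ihφ := ihφ fun x hx => hs x (Finset.mem_union_left _ hx)
    have ihψ := ihψ fun x hx => hs x (Finset.mem_union_right _ hx)
    rw [sat, sat, hρ.surjective.exists₂]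
    simp only [disjoint_renameHeap, ← renameHeap_union, hρ.injective.eq_iff, ihφ, ihψ]
  | wand φ ψ ihφ ihψ =>
    have ihφ := ihφ fun x hx => hs x (Finset.mem_union_left _ hx)
    have ihψ := ihψ fun x hx => hs x (Finset.mem_union_right _ hx)
    rw [sat, sat, hρ.surjective.forall]
    simp only [disjoint_renameHeap, ← renameHeap_union, ihφ, ihψ]

/-- Satisfiability reduces to validity: φ is satisfiable iff for some
equivalence relation ≈ on its variables, the formula
(emp ∧ ⋀_{x≈y} x = y ∧ ⋀_{x≉y} x ≠ y) ⟹ (φ ⧆ ⊤) is valid. -/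
theorem stmt_19 (φ : Formula) (X : Finset Var) (hX : φ.vars ⊆ X) :
    (∃ (s : Store) (h : Heap), sat s h φ) ↔
    ∃ r : Var → Var → Prop, Equivalence r ∧
      ∀ (s : Store) (h : Heap),
        (h = ∅ ∧ (∀ x ∈ X, ∀ y ∈ X, r x y → s x = s y) ∧
          (∀ x ∈ X, ∀ y ∈ X, ¬ r x y → s x ≠ s y)) →
        ∃ h' : Heap, Finmap.Disjoint h h' ∧ sat s h' φ := by
  constructor
  · rintro ⟨s, h, hsat⟩
    refine ⟨fun x y => s x = s y, ⟨fun _ => rfl, Eq.symm, Eq.trans⟩, ?_⟩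
    rintro s' _ ⟨rfl, hr, hnr⟩
    obtain ⟨σ, hσ⟩ := Equiv.Perm.exists_apply_eq_of_eq_iff_eq (X := X) (f := s) (g := s')
      fun x hx y hy => ⟨hr x hx y hy, not_imp_not.1 (hnr x hx y hy)⟩
    exact ⟨renameHeap σ h, Finmap.disjoint_empty _,
      (sat_renameHeap σ φ (fun x hx => (hσ x (hX hx)).symm) h).2 hsat⟩
  · rintro ⟨r, hr, hvalid⟩
    obtain ⟨s, hs⟩ := hr.exists_eq_iff
    obtain ⟨h, -, hsat⟩ :=
      hvalid s ∅ ⟨rfl, fun x _ y _ => (hs x y).2, fun x _ y _ => mt (hs x y).1⟩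
    exact ⟨s, h, hsat⟩
end
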